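/- arXiv:2212.03359 — 7 statements merged into one kernel-verified Lean document; each statement's English description precedes it below -/
import Mathlib

section
/- Let M = (v_1, ..., v_m) be a list of words over alphabet Σ such that each |v_i| ≥ m, and for every letter a ∈ Σ there is at most one word v_i that is a nonempty power of a. Then there exists a prefix code W = {w_1, ..., w_m} such that w_i is commutatively equivalent to v_i for each i. -/
/-!
Words of length at least `m` whose length-`m` prefixes are pairwise distinct form a prefix code,
so it suffices to pick, for each `vᵢ`, the `m`-prefix of a rearrangement of `vᵢ`, injectively in
`i`. By Hall's marriage theorem this is possible as soon as any `k` of the words have at least `k`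
such prefixes between them. A word with two distinct letters has at least `m` of them: for each
letter `z` and each `1 ≤ t ≤ min (count z) m`, put `t` copies of `z` first and another letter
right after them. Otherwise all `k` words are powers `aᵢⁿ` of pairwise distinct letters, and the
prefixes `aᵢᵐ` are distinct.
-/

open List

namespace List

variable {α : Type*}

theorem IsPrefix.take_eq_take {u w : List α} (h : u <+: w) {m : ℕ} (hm : m ≤ u.length) :
    u.take m = w.take m :=
  (h.take m).eq_of_length (by simp [length_take, h.length_le.trans' hm, hm])

variable [DecidableEq α]

def permPrefixes (m : ℕ) (l : List α) : Finset (List α) :=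
  l.permutations.toFinset.image (take m)

theorem mem_permPrefixes {m : ℕ} {l u : List α} :
    u ∈ permPrefixes m l ↔ ∃ w, w ~ l ∧ w.take m = u := by
  simp [permPrefixes, mem_permutations]

theorem replicate_mem_permPrefixes {m n : ℕ} (a : α) (h : m ≤ n) :
    replicate m a ∈ permPrefixes m (replicate n a) :=
  mem_permPrefixes.2 ⟨_, Perm.refl _, by simp [h]⟩

def frontLoad (l : List α) (z : α) (t : ℕ) : List α :=
  replicate t z ++ (l.filter (· != z) ++ replicate (l.count z - t) z)

theorem frontLoad_perm {l : List α} {z : α} {t : ℕ} (ht : t ≤ l.count z) :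
    frontLoad l z t ~ l :=
  calc frontLoad l z t
      ~ replicate t z ++ (replicate (l.count z - t) z ++ l.filter (· != z)) :=
        perm_append_comm.append_left _
    _ = l.filter (· == z) ++ l.filter (· != z) := by
        rw [← append_assoc, ← replicate_add, Nat.add_sub_cancel' ht, filter_beq]
    _ ~ l := filter_append_perm _ l

theorem getElem?_frontLoad_of_lt {l : List α} {z : α} {t k : ℕ} (hk : k < t) :
    (frontLoad l z t)[k]? = some z := by
  simp [frontLoad, getElem?_append_left, hk]

theorem getElem?_frontLoad_ne {l : List α} {z : α} (t : ℕ) (hz : ∃ y ∈ l, y ≠ z) :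
    (frontLoad l z t)[t]? ≠ some z := by
  obtain ⟨y, hy, hyz⟩ := hz
  obtain ⟨x, r, hxr⟩ := exists_cons_of_ne_nil
    (ne_nil_of_mem (mem_filter.2 ⟨hy, bne_iff_ne.2 hyz⟩) : l.filter (· != z) ≠ [])
  have hxz : x ≠ z :=
    bne_iff_ne.1 (mem_filter.1 (hxr ▸ mem_cons_self : x ∈ l.filter (· != z))).2
  simp [frontLoad, hxr, hxz]

theorem le_sum_min_count {m : ℕ} {l : List α} (hm : m ≤ l.length) :
    m ≤ ∑ z ∈ l.toFinset, min (l.count z) m := by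
  by_cases h : ∃ z ∈ l.toFinset, m ≤ l.count z
  · obtain ⟨z, hz, hmz⟩ := h
    calc m = min (l.count z) m := (min_eq_right hmz).symm
      _ ≤ _ := Finset.single_le_sum (f := fun z => min (l.count z) m) (by simp) hz
  · push Not at h
    calc m ≤ ∑ z ∈ l.toFinset, l.count z := hm.trans_eq (sum_toFinset_count_eq_length l).symm
      _ = _ := Finset.sum_congr rfl fun z hz => (min_eq_left (h z hz).le).symm

theorem injOn_take_frontLoad {m : ℕ} {l : List α} (hl : ∀ z, ∃ y ∈ l, y ≠ z) :
    Set.InjOn (fun p : (_ : α) × ℕ => (frontLoad l p.1 p.2).take m)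
      {p | 1 ≤ p.2 ∧ p.2 ≤ m} := by
  rintro ⟨z, t⟩ ⟨ht1, htm⟩ ⟨z', t'⟩ ⟨ht1', htm'⟩ heq
  have hfirst := congrArg (·[0]?) heq
  simp only [getElem?_take, if_pos (show 0 < m by omega),
    getElem?_frontLoad_of_lt ht1, getElem?_frontLoad_of_lt ht1', Option.some_inj] at hfirst
  subst hfirst
  -- the first letter other than `z` sits at position `t`
  suffices ∀ {t t'}, t < t' → t' ≤ m →
      (frontLoad l z t).take m ≠ (frontLoad l z t').take m by
    rcases lt_trichotomy t t' with h | rfl | h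
    · exact absurd heq (this h htm')
    · rfl
    · exact absurd heq.symm (this h htm)
  intro t t' h htm' heq
  have := congrArg (·[t]?) heq
  simp only [getElem?_take, if_pos (show t < m by omega), getElem?_frontLoad_of_lt h] at this
  exact getElem?_frontLoad_ne t (hl z) this

theorem le_card_permPrefixes {m : ℕ} {l : List α} (hm : m ≤ l.length)
    (hl : ∃ x ∈ l, ∃ y ∈ l, x ≠ y) : m ≤ (permPrefixes m l).card := by
  have hother : ∀ z, ∃ y ∈ l, y ≠ z := by
    obtain ⟨x, hx, y, hy, hxy⟩ := hl
    intro z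
    by_cases hxz : x = z
    · exact ⟨y, hy, hxz ▸ hxy.symm⟩
    · exact ⟨x, hx, hxz⟩
  let D := l.toFinset.sigma fun z => Finset.Icc 1 (min (l.count z) m)
  have hD : ∀ p ∈ D, p.2 ≤ l.count p.1 ∧ 1 ≤ p.2 ∧ p.2 ≤ m := by
    simp +contextual [D]
  calc m ≤ ∑ z ∈ l.toFinset, min (l.count z) m := le_sum_min_count hm
    _ = D.card := by simp [D]
    _ ≤ _ := Finset.card_le_card_of_injOn (fun p => (frontLoad l p.1 p.2).take m)
        (fun p hp => mem_permPrefixes.2 ⟨_, frontLoad_perm (hD p hp).1, rfl⟩)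
        ((injOn_take_frontLoad hother).mono fun p hp => (hD p hp).2)

theorem card_le_card_biUnion_permPrefixes {m : ℕ} (v : Fin m → List α)
    (hlen : ∀ i, m ≤ (v i).length)
    (hpow : ∀ a : α, ∀ i j : Fin m,
      (v i ≠ [] ∧ ∀ x ∈ v i, x = a) → (v j ≠ [] ∧ ∀ x ∈ v j, x = a) → i = j)
    (s : Finset (Fin m)) : s.card ≤ (s.biUnion fun i => permPrefixes m (v i)).card := by
  by_cases hs : ∃ i ∈ s, ∃ x ∈ v i, ∃ y ∈ v i, x ≠ y
  · obtain ⟨i, hi, hxy⟩ := hs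
    calc s.card ≤ m := (Finset.card_le_univ s).trans_eq (Fintype.card_fin m)
      _ ≤ (permPrefixes m (v i)).card := le_card_permPrefixes (hlen i) hxy
      _ ≤ _ := Finset.card_le_card <|
          Finset.subset_biUnion_of_mem (fun i => permPrefixes m (v i)) hi
  push Not at hs
  have hne : ∀ i, v i ≠ [] := fun i => ne_nil_of_length_pos (i.pos.trans_le (hlen i))
  have hconst : ∀ i ∈ s, ∀ x ∈ v i, x = (v i).head (hne i) :=
    fun i hi x hx => hs i hi x hx _ (head_mem _)
  refine Finset.card_le_card_of_injOn (fun i => replicate m ((v i).head (hne i))) ?_ ?_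
  · intro i hi
    have hvi : v i = replicate (v i).length ((v i).head (hne i)) :=
      eq_replicate_iff.2 ⟨rfl, hconst i hi⟩
    refine Finset.mem_biUnion.2 ⟨i, hi, ?_⟩
    rw [hvi]
    exact replicate_mem_permPrefixes _ (hlen i)
  · intro i hi j hj hij
    have ha := replicate_right_injective (Nat.pos_iff_ne_zero.1 i.pos) hij
    exact hpow _ i j ⟨hne i, hconst i hi⟩ ⟨hne j, ha ▸ hconst j hj⟩

end List

theorem stmt0_general {Sigma : Type*} (m : ℕ) (v : Fin m → List Sigma)
    (hlen : ∀ i, m ≤ (v i).length)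
    (hpow : ∀ a : Sigma, ∀ i j : Fin m,
      (v i ≠ [] ∧ ∀ x ∈ v i, x = a) → (v j ≠ [] ∧ ∀ x ∈ v j, x = a) → i = j) :
    ∃ w : Fin m → List Sigma, (∀ i, (w i).Perm (v i)) ∧
      ∀ i j : Fin m, i ≠ j → ¬ (w i <+: w j) := by
  classical
  obtain ⟨f, hf_inj, hf_mem⟩ := (Finset.all_card_le_biUnion_card_iff_exists_injective
    fun i => permPrefixes m (v i)).1 (card_le_card_biUnion_permPrefixes v hlen hpow)
  choose w hw_perm hw_take using fun i => mem_permPrefixes.1 (hf_mem i)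
  refine ⟨w, hw_perm, fun i j hij hpre => hij (hf_inj ?_)⟩
  rw [← hw_take i, ← hw_take j]
  exact hpre.take_eq_take ((hlen i).trans (hw_perm i).length_eq.ge)

/-- Let M = (v_1, ..., v_m) be a list of nonempty words over alphabet Σ such
that each |v_i| ≥ m, and for every letter a there is at most one word v_i that is a
nonempty power of a.  Then there exists a prefix code W = {w_1,...,w_m} with w_i
commutatively equivalent to v_i for each i. -/
theorem stmt0 {Sigma : Type*} (m : ℕ) (v : Fin m → List Sigma)
    (hne : ∀ i, v i ≠ [])
    (hlen : ∀ i, m ≤ (v i).length)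
    (hpow : ∀ a : Sigma, ∀ i j : Fin m,
      (v i ≠ [] ∧ ∀ x ∈ v i, x = a) → (v j ≠ [] ∧ ∀ x ∈ v j, x = a) → i = j) :
    ∃ w : Fin m → List Sigma, (∀ i, (w i).Perm (v i)) ∧
      ∀ i j : Fin m, i ≠ j → ¬ (w i <+: w j) :=
  stmt0_general m v hlen hpow
end

section
/- If the language of an ED0L system (deterministic Lindenmayer system with a single table) contains two distinct words that are commutatively equivalent, then the language is finite; formally, let h : V* → V* be a monoid morphism, S ∈ V, Σ ⊆ V, and L = { hⁿ(S) | n ≥ 0 } ∩ Σ*; if L contains two distinct words with the same Parikh image, then L is finite. -/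
/-- If the language of an ED0L system (morphism h : V* → V*, axiom S ∈ V,
terminal subalphabet T ⊆ V), L = { hⁿ(S) | n ≥ 0 } ∩ T*, contains two distinct words
with the same Parikh image (i.e., that are commutatively equivalent), then L is finite. -/
theorem stmt1 {V : Type*} (h : List V → List V)
    (hm : ∀ x y : List V, h (x ++ y) = h x ++ h y)
    (S : V) (T : Set V)
    (L : Set (List V))
    (hL : L = {w | (∃ n : ℕ, w = h^[n] [S]) ∧ ∀ x ∈ w, x ∈ T})
    (u v : List V) (hu : u ∈ L) (hv : v ∈ L) (huv : u ≠ v) (hperm : u.Perm v) :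
    L.Finite := by
  -- h preserves permutations
  have hpres : ∀ x y : List V, x.Perm y → (h x).Perm (h y) := by
    intro x y p
    induction p with
    | nil => exact List.Perm.refl _
    | @cons a l₁ l₂ p ih =>
        have e : ∀ l : List V, h (a :: l) = h [a] ++ h l := fun l => by
          simpa using hm [a] l
        rw [e l₁, e l₂]
        exact (List.Perm.refl _).append ih
    | swap a b l =>
        have e : ∀ x y : V, ∀ l : List V, h (x :: y :: l) = h [x] ++ h [y] ++ h l := by
          intro x y l
          have h1 := hm [x] (y :: l)
          have h2 := hm [y] l
          simp only [List.singleton_append] at h1 h2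
          rw [h1, h2, List.append_assoc]
        rw [e b a l, e a b l]
        exact List.perm_append_comm.append (List.Perm.refl _)
    | trans _ _ ih1 ih2 => exact ih1.trans ih2
  suffices H : ∀ m k : ℕ, m < k → (h^[m] [S]).Perm (h^[k] [S]) → L.Finite by
    rw [hL] at hu hv
    obtain ⟨⟨m, hm1⟩, -⟩ := hu
    obtain ⟨⟨k, hk1⟩, -⟩ := hv
    have hmk : m ≠ k := by
      rintro rfl
      exact huv (hm1.trans hk1.symm)
    rcases hmk.lt_or_gt with hlt | hlt
    · exact H m k hlt (hm1 ▸ hk1 ▸ hperm)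
    · exact H k m hlt (hk1 ▸ hm1 ▸ hperm.symm)
  intro m k hmk hp
  -- periodic shift of the permutation relation
  have shift : ∀ j : ℕ, (h^[m + j] [S]).Perm (h^[k + j] [S]) := by
    intro j
    induction j with
    | zero => simpa using hp
    | succ j ih =>
        have e1 : h^[m + (j + 1)] [S] = h (h^[m + j] [S]) := by
          rw [← Nat.add_assoc, Function.iterate_succ_apply']
        have e2 : h^[k + (j + 1)] [S] = h (h^[k + j] [S]) := by
          rw [← Nat.add_assoc, Function.iterate_succ_apply']
        rw [e1, e2]
        exact hpres _ _ ih
  -- every iterate is a permutation of one with index ≤ k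
  have key : ∀ n : ℕ, ∃ j ≤ k, (h^[n] [S]).Perm (h^[j] [S]) := by
    intro n
    induction n using Nat.strong_induction_on with
    | _ n ih =>
        by_cases hn : n ≤ k
        · exact ⟨n, hn, List.Perm.refl _⟩
        · push_neg at hn
          obtain ⟨j, rfl⟩ : ∃ j, n = k + j := ⟨n - k, by omega⟩
          have hperm' : (h^[k + j] [S]).Perm (h^[m + j] [S]) := (shift j).symm
          obtain ⟨j', hj', hpj'⟩ := ih (m + j) (by omega)
          exact ⟨j', hj', hperm'.trans hpj'⟩
  -- L is contained in a finite union of permutation classes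
  apply Set.Finite.subset (Set.Finite.biUnion (Set.finite_Iic k)
    (fun j _ => (List.finite_toSet (h^[j] [S]).permutations)))
  intro w hw
  rw [hL] at hw
  obtain ⟨⟨n, rfl⟩, -⟩ := hw
  obtain ⟨j, hj, hpj⟩ := key n
  exact Set.mem_biUnion hj (by simpa [List.mem_permutations] using hpj)
end

section
/- The family of bounded Parikh semilinear languages is contained in the family of bounded Ginsburg semilinear languages. Concretely: for any words w_1,...,w_k ∈ Σ⁺ and semilinear set Q₂ ⊆ ℕⁿ (n = |Σ|), the language L = { w_1^{i_1} ⋯ w_k^{i_k} | i_1,...,i_k ∈ ℕ, ψ(w_1^{i_1}⋯w_k^{i_k}) ∈ Q₂ } equals φ(Q₁) for some semilinear set Q₁ ⊆ ℕᵏ, where φ(i_1,...,i_k) = w_1^{i_1}⋯w_k^{i_k}. -/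
/-! The Parikh image of `w₁^{i₁} ⋯ w_k^{i_k}` is `∑ j, i j • ψ(w j)`, additive in `i`. Hence
`Q₁ := {i | ψ(φ(i)) ∈ Q₂}` is the preimage of a semilinear set under a monoid homomorphism
`ℕᵏ → ℕⁿ`, and such preimages are semilinear (`IsSemilinearSet.preimage`: the preimage of a linear
set is a projection of the solution set of a linear Diophantine system, semilinear by Dickson's
lemma). The definitions `IsLinear`, `IsSemilinear` are equivalent to Mathlib's. -/

/-- A linear subset of ℕᵏ. -/
def IsLinear {k : ℕ} (Q : Set (Fin k → ℕ)) : Prop :=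
  ∃ (r : ℕ) (v₀ : Fin k → ℕ) (v : Fin r → Fin k → ℕ),
    Q = {x | ∃ c : Fin r → ℕ, x = v₀ + ∑ j, c j • v j}

/-- A semilinear subset of ℕᵏ: a finite union of linear sets. -/
def IsSemilinear {k : ℕ} (Q : Set (Fin k → ℕ)) : Prop :=
  ∃ (t : ℕ) (f : Fin t → Set (Fin k → ℕ)), (∀ i, IsLinear (f i)) ∧ Q = ⋃ i, f i

/-- The word wⁱ (i-fold concatenation of w). -/
def wordPow {α : Type*} (w : List α) (i : ℕ) : List α := (List.replicate i w).flatten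

/-- φ(i₁,...,i_k) = w₁^{i₁} ⋯ w_k^{i_k}. -/
def phiW {α : Type*} {k : ℕ} (w : Fin k → List α) (i : Fin k → ℕ) : List α :=
  (List.finRange k).flatMap fun j => wordPow (w j) (i j)

/-- The Parikh map ψ over the alphabet Fin n. -/
def parikh {n : ℕ} (w : List (Fin n)) : Fin n → ℕ := fun a => w.count a

lemma AddMonoidHom.eq_sum_smul_single {ι M : Type*} [Fintype ι] [DecidableEq ι]
    [AddCommMonoid M] (f : (ι → ℕ) →+ M) (c : ι → ℕ) : f c = ∑ j, c j • f (Pi.single j 1) := by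
  conv_lhs => rw [← Finset.univ_sum_single c]
  simp only [map_sum, ← map_nsmul, ← Pi.single_smul', smul_eq_mul, mul_one]

lemma isLinear_iff_isLinearSet {k : ℕ} {Q : Set (Fin k → ℕ)} : IsLinear Q ↔ IsLinearSet Q := by
  rw [isLinearSet_iff_exists_fin_addMonoidHom]
  constructor
  · rintro ⟨r, v₀, v, rfl⟩
    refine ⟨v₀, r, (Fintype.linearCombination ℕ v).toAddMonoidHom, ?_⟩
    ext x
    simp [Set.mem_vadd_set, Fintype.linearCombination_apply, eq_comm]
  · rintro ⟨v₀, r, f, rfl⟩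
    refine ⟨r, v₀, fun j => f (Pi.single j 1), ?_⟩
    simp_rw [← f.eq_sum_smul_single]
    ext x
    simp [Set.mem_vadd_set, eq_comm]

lemma isSemilinear_iff_isSemilinearSet {k : ℕ} {Q : Set (Fin k → ℕ)} :
    IsSemilinear Q ↔ IsSemilinearSet Q := by
  constructor
  · rintro ⟨t, f, hf, rfl⟩
    exact ⟨Set.range f, Set.finite_range f, by simpa [isLinear_iff_isLinearSet] using hf,
      (Set.sUnion_range f).symm⟩
  · rintro ⟨S, hS, hlin, rfl⟩
    obtain ⟨t, f, -, rfl⟩ := hS.fin_param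
    exact ⟨t, f, by simpa [isLinear_iff_isLinearSet] using hlin, Set.sUnion_range f⟩

lemma count_wordPow {α : Type*} [BEq α] (a : α) (u : List α) (i : ℕ) :
    (wordPow u i).count a = i * u.count a := by
  simp [wordPow, List.count_flatten, List.map_replicate, List.sum_replicate]

lemma parikh_phiW {n k : ℕ} (w : Fin k → List (Fin n)) (i : Fin k → ℕ) :
    parikh (phiW w i) = Fintype.linearCombination ℕ (fun j => parikh (w j)) i := by
  funext a
  simp [parikh, phiW, List.count_flatMap, Function.comp_def, count_wordPow,
    Fintype.linearCombination_apply, Finset.sum_apply, Fin.sum_univ_def]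

theorem stmt4_general {n k : ℕ} (w : Fin k → List (Fin n))
    (Q₂ : Set (Fin n → ℕ)) (hQ₂ : IsSemilinear Q₂) :
    ∃ Q₁ : Set (Fin k → ℕ), IsSemilinear Q₁ ∧
      {x | ∃ i : Fin k → ℕ, x = phiW w i ∧ parikh (phiW w i) ∈ Q₂} = phiW w '' Q₁ := by
  refine ⟨{i | parikh (phiW w i) ∈ Q₂}, ?_, ?_⟩
  · simp_rw [isSemilinear_iff_isSemilinearSet, parikh_phiW] at hQ₂ ⊢
    exact hQ₂.preimage (Fintype.linearCombination ℕ fun j => parikh (w j))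
  · ext x
    simp [eq_comm, and_comm]

/-- every bounded Parikh semilinear language is bounded Ginsburg semilinear:
for words w₁,...,w_k ∈ Σ⁺ and a semilinear Q₂ ⊆ ℕⁿ, the language
{ w₁^{i₁}⋯w_k^{i_k} | ψ(w₁^{i₁}⋯w_k^{i_k}) ∈ Q₂ } equals φ(Q₁) for some semilinear
Q₁ ⊆ ℕᵏ. -/
theorem stmt4 {n k : ℕ} (w : Fin k → List (Fin n)) (hw : ∀ j, w j ≠ [])
    (Q₂ : Set (Fin n → ℕ)) (hQ₂ : IsSemilinear Q₂) :
    ∃ Q₁ : Set (Fin k → ℕ), IsSemilinear Q₁ ∧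
      {x | ∃ i : Fin k → ℕ, x = phiW w i ∧ parikh (phiW w i) ∈ Q₂} = phiW w '' Q₁ :=
  stmt4_general w Q₂ hQ₂
end

section
/- There exists a bounded general semilinear language that is not recursively enumerable. Concretely: if L ⊆ a* is not recursively enumerable and b, c are new symbols, then L' = bLc ∪ ca*b is a bounded language (subset of b*a*c*a*b*) whose Parikh image equals that of the regular language ca*b (hence is semilinear), yet L' is not recursively enumerable. -/
/-! The computable map `m ↦ b aᵐ c` pulls `L'` back to `L` (its image misses `c a* b` because `b ≠ c`),
so `L'` cannot be r.e. Swapping the two end letters of `b aᵐ c` is a permutation, which puts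
the Parikh image of `L'` inside that of `c a* b`. -/

theorem Primrec.list_replicate {α : Type*} [Primcodable α] : Primrec₂ (@List.replicate α) :=
  (Primrec.nat_iterate Primrec.fst (Primrec.const []) (Primrec.list_cons.comp₂
    (Primrec.snd.comp₂ Primrec₂.left) Primrec₂.right)).of_eq fun p => by
    induction p.1 <;> simp_all [List.replicate_succ, -Function.iterate_succ, Function.iterate_succ']

theorem REPred.comp {α β : Type*} [Primcodable α] [Primcodable β] {p : β → Prop} {f : α → β}
    (hp : REPred p) (hf : Computable f) : REPred fun a => p (f a) :=
  Partrec.comp hp hf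

theorem List.perm_append_singleton_swap {α : Type*} (x y : α) (l : List α) :
    ([x] ++ l ++ [y]).Perm ([y] ++ l ++ [x]) :=
  List.perm_append_comm.trans (.cons y (List.perm_append_comm (l₁ := [x]) (l₂ := l)))

theorem primrec_framed_replicate {α : Type*} [Primcodable α] (x a y : α) :
    Primrec fun m => [x] ++ List.replicate m a ++ [y] :=
  Primrec.list_append.comp
    (Primrec.list_append.comp (.const [x]) (Primrec.list_replicate.comp .id (.const a)))
    (.const [y])

theorem framed_replicate_mem_union_iff {α : Type*} {x y : α} (hxy : x ≠ y) (a : α)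
    (L : Set ℕ) (m : ℕ) :
    [x] ++ List.replicate m a ++ [y] ∈
        {w | ∃ m ∈ L, w = [x] ++ List.replicate m a ++ [y]} ∪
          {w | ∃ m : ℕ, w = [y] ++ List.replicate m a ++ [x]} ↔ m ∈ L := by
  refine ⟨?_, fun hm => Or.inl ⟨m, hm, rfl⟩⟩
  rintro (⟨m', hm', h⟩ | ⟨m', h⟩)
  · obtain rfl : m = m' := by simpa using congrArg List.length h
    exact hm'
  · exact absurd (List.cons.inj h).1 hxy

/-- There is a bounded general semilinear language that is not recursively
enumerable.  Concretely, over the alphabet Fin 3 with a = 0, b = 1, c = 2: if L ⊆ a*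
(represented by its set of exponents L : Set ℕ) is not r.e., then
L' = bLc ∪ ca*b is bounded (a subset of b* a* c* a* b*), has the same Parikh image as
the regular language ca*b (hence a semilinear Parikh image), and is not r.e. -/
theorem stmt5 (L : Set ℕ) (hL : ¬ REPred fun m => m ∈ L) :
    let a : Fin 3 := 0
    let b : Fin 3 := 1
    let c : Fin 3 := 2
    let L' : Set (List (Fin 3)) :=
      {w | ∃ m ∈ L, w = [b] ++ List.replicate m a ++ [c]} ∪
      {w | ∃ m : ℕ, w = [c] ++ List.replicate m a ++ [b]}
    -- L' is bounded: L' ⊆ b* a* c* a* b*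
    (∀ w ∈ L', ∃ i₁ i₂ i₃ i₄ i₅ : ℕ,
        w = List.replicate i₁ b ++ List.replicate i₂ a ++ List.replicate i₃ c ++
            List.replicate i₄ a ++ List.replicate i₅ b) ∧
    -- L' has the same Parikh image as the regular language c a* b
    (fun (w : List (Fin 3)) (x : Fin 3) => w.count x) '' L' =
      (fun (w : List (Fin 3)) (x : Fin 3) => w.count x) ''
        {w | ∃ m : ℕ, w = [c] ++ List.replicate m a ++ [b]} ∧
    -- L' is not recursively enumerable
    ¬ REPred fun w => w ∈ L' := by
  intro a b c L'
  refine ⟨?bounded, ?parikh, ?not_re⟩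
  case bounded =>
    rintro w (⟨m, -, rfl⟩ | ⟨m, rfl⟩)
    · exact ⟨1, m, 1, 0, 0, by simp⟩
    · exact ⟨0, 0, 1, m, 1, by simp⟩
  case parikh =>
    rw [Set.image_union, Set.union_eq_right]
    rintro _ ⟨_, ⟨m, -, rfl⟩, rfl⟩
    exact ⟨_, ⟨m, rfl⟩, funext fun x => (List.perm_append_singleton_swap c b _).count_eq x⟩
  case not_re =>
    intro hre
    exact hL <| (hre.comp (primrec_framed_replicate b a c).to_comp).of_eq
      (framed_replicate_mem_union_iff (by decide) a L)
end

section
/- The language L = { x # x | x ∈ {a,b}⁺ } cannot be accepted by any one-way nondeterministic reversal-bounded multicounter machine (NCM). More abstractly: suppose a machine with s states and k counters accepts each word w of L within c·|w| steps for a constant c (so the counters are bounded by c·|w|); then for large n, the number of distinct reachable configurations (state, counter values) upon reading the # in inputs x#y with |x| = n is at most s(cn)ᵏ < 2ⁿ, so by pigeonhole two distinct x, y of length n share a configuration and x#y would be accepted — a contradiction. -/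
/-!
After reading `x#` with `|x| = n`, every configuration has counters at most `c(2n+1)`, so only
polynomially many configurations, `s(c(2n+1)+1)ᵏ`, are available to the `2ⁿ` words `x` of length
`n`. Pick for each `x` a configuration from which `x` itself is accepted; for large `n` two distinct
words `x ≠ y` receive the same one, and then `x#y` is accepted as well.
-/

open Filter Asymptotics Finset

lemma eventually_mul_pow_lt_two_pow (C k : ℕ) : ∀ᶠ n : ℕ in atTop, C * n ^ k < 2 ^ n := by
  have h : (fun n : ℕ ↦ ((C * n ^ k : ℕ) : ℝ)) =o[atTop] fun n ↦ ((2 ^ n : ℕ) : ℝ) := by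
    push_cast
    exact (isLittleO_pow_const_const_pow_of_one_lt k one_lt_two).const_mul_left (C : ℝ)
  have hpos : ∀ᶠ n : ℕ in atTop, 0 < ‖((2 ^ n : ℕ) : ℝ)‖ :=
    .of_forall fun n ↦ by rw [Real.norm_natCast]; positivity
  filter_upwards [h.eventuallyLT_norm_of_eventually_pos hpos] with n hn
  simpa only [Real.norm_natCast, Nat.cast_lt] using hn

lemma eventually_mul_linear_pow_lt_two_pow (C a b k : ℕ) :
    ∀ᶠ n : ℕ in atTop, C * (a * n + b) ^ k < 2 ^ n := by
  filter_upwards [eventually_mul_pow_lt_two_pow (C * (a + b) ^ k) k, eventually_ge_atTop 1]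
    with n hlt hn
  calc C * (a * n + b) ^ k ≤ C * ((a + b) * n) ^ k := by gcongr; nlinarith
    _ = C * (a + b) ^ k * n ^ k := by rw [mul_pow]; ring
    _ < 2 ^ n := hlt

lemma card_le_card_of_accepts_only_self {α β : Type*} {X : Finset α} {T : Finset β}
    (conf : α → Set β) (acc : β → α → Prop) (hconf : ∀ x ∈ X, conf x ⊆ T)
    (hself : ∀ x ∈ X, ∃ cf ∈ conf x, acc cf x)
    (honly : ∀ x ∈ X, ∀ y ∈ X, ∀ cf ∈ conf x, acc cf y → x = y) :
    #X ≤ #T := by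
  classical
  by_contra! hlt
  obtain ⟨x₀, hx₀⟩ := card_pos.1 (hlt.trans_le' (Nat.zero_le _))
  have : Nonempty β := let ⟨cf, _⟩ := hself x₀ hx₀; ⟨cf⟩
  choose! cf hcf hacc using hself
  obtain ⟨x, hx, y, hy, hne, heq⟩ :=
    exists_ne_map_eq_of_card_lt_of_maps_to hlt fun x hx ↦ hconf x hx (hcf x hx)
  exact hne (honly y hy x hx (cf y) (hcf y hy) (heq ▸ hacc x hx)).symm

def boundedConfigs (s k B : ℕ) : Finset (Fin s × (Fin k → ℕ)) :=
  univ ×ˢ Fintype.piFinset fun _ ↦ range (B + 1)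

lemma mem_boundedConfigs {s k B : ℕ} {cf : Fin s × (Fin k → ℕ)} :
    cf ∈ boundedConfigs s k B ↔ ∀ i, cf.2 i ≤ B := by
  simp [boundedConfigs]

lemma card_boundedConfigs (s k B : ℕ) : #(boundedConfigs s k B) = s * (B + 1) ^ k := by
  simp [boundedConfigs]

/-- The language L = { x # x | x ∈ {a,b}⁺ } cannot be accepted by any NCM.
Abstract formulation: suppose a machine with s states and k counters processes inputs
x # y (x, y ∈ {a,b}*); after reading x#, it can be in any configuration (state, counter
values) from the set `conf x`, where all counter values are bounded by c·(2|x|+1)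
(as the machine accepts each word w within c·|w| steps); acceptance of x#y means some
configuration reachable after x# leads to acceptance on the remaining input y.
If the accepted language is exactly { x#x | x ≠ [] }, we get a contradiction: for large n
the number s·(c(2n+1)+1)ᵏ of available configurations is less than the number 2ⁿ of words
x of length n, so two distinct x,y share a configuration and x#y would be accepted. -/
theorem stmt8 (s k c : ℕ)
    (conf : List (Fin 2) → Set (Fin s × (Fin k → ℕ)))
    (hbound : ∀ x : List (Fin 2), ∀ cf ∈ conf x, ∀ i : Fin k,
      cf.2 i ≤ c * (2 * x.length + 1))
    (acc : (Fin s × (Fin k → ℕ)) → List (Fin 2) → Prop)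
    (haccept : ∀ x y : List (Fin 2),
      (∃ cf ∈ conf x, acc cf y) ↔ (x ≠ [] ∧ x = y)) :
    False := by
  obtain ⟨n, hlt, hn⟩ := ((eventually_mul_linear_pow_lt_two_pow s (2 * c) (c + 1) k).and
    (eventually_ge_atTop 1)).exists
  let words : Finset (List (Fin 2)) :=
    (univ : Finset (Fin n → Fin 2)).map ⟨List.ofFn, List.ofFn_injective⟩
  have hlen : ∀ x ∈ words, x.length = n := by simp [words]
  have hcard := card_le_card_of_accepts_only_self (T := boundedConfigs s k (c * (2 * n + 1)))
    conf acc (fun x hx cf hcf ↦ mem_boundedConfigs.2 (hlen x hx ▸ hbound x cf hcf))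
    (fun x hx ↦ (haccept x x).2 ⟨List.ne_nil_of_length_pos (hlen x hx ▸ hn), rfl⟩)
    (fun x _ y _ cf hcf hacc ↦ ((haccept x y).1 ⟨cf, hcf, hacc⟩).2)
  simp only [words, card_map, card_univ, Fintype.card_fun, Fintype.card_fin,
    card_boundedConfigs] at hcard
  rw [show c * (2 * n + 1) + 1 = 2 * c * n + (c + 1) by ring] at hcard
  omega
end

section
/- The two-sided Dyck-like language L₂ = { w ∈ {a,b}* | |w|_a = |w|_b } is not counting regular: its counting function satisfies f(2m) = C(2m, m) (central binomial coefficient) and f(2m+1) = 0, and this function is not eventually equal to the counting function of any regular language (equivalently, Σ f(n)xⁿ is not a rational power series). -/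
/-!
Counting a regular language by length gives `n ↦ φ (Tⁿ v)` for the transfer operator `T` of a
DFA, so by Cayley–Hamilton its even-indexed subsequence is annihilated by the characteristic
polynomial of `T²`, viewed as a polynomial in the shift operator. The central binomial
coefficients `b m` satisfy no such recurrence: `b (m + 1) / b m → 4` forces `4` to be a root of
any annihilating polynomial `P = (X - 4) Q`; then `s = Q(shift) b` satisfies `s (m + 1) = 4 s m`
eventually while `s m / 4 ^ m → 0` (as `b m / 4 ^ m → 0`), so `s` vanishes eventually and
induction on the degree concludes.
-/

open Filter Finset Polynomial Topology

section Shift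

variable {R : Type*} [CommSemiring R]

def seqShift : Module.End R (ℕ → R) := LinearMap.funLeft R R (· + 1)

lemma seqShift_apply (u : ℕ → R) (m : ℕ) : seqShift u m = u (m + 1) := rfl

lemma seqShift_pow_apply (u : ℕ → R) (i m : ℕ) : (seqShift ^ i) u m = u (m + i) := by
  induction i generalizing u with
  | zero => rfl
  | succ i ih => rw [pow_succ, Module.End.mul_apply, ih, seqShift_apply, add_assoc]

lemma aeval_seqShift_apply (P : R[X]) (u : ℕ → R) (m : ℕ) :
    aeval seqShift P u m = ∑ i ∈ range (P.natDegree + 1), P.coeff i * u (m + i) := by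
  simp [aeval_eq_sum_range, seqShift_pow_apply]

lemma aeval_seqShift_eventuallyEq (P : R[X]) {u v : ℕ → R} (h : u =ᶠ[atTop] v) :
    aeval seqShift P u =ᶠ[atTop] aeval seqShift P v := by
  obtain ⟨N, hN⟩ := eventually_atTop.mp h
  filter_upwards [eventually_ge_atTop N] with m hm
  simp only [aeval_seqShift_apply]
  exact sum_congr rfl fun i _ => by rw [hN (m + i) (by omega)]

end Shift

section Orbit

variable {K V : Type*} [CommRing K] [AddCommGroup V] [Module K V]

lemma aeval_seqShift_orbit (f : Module.End K V) (φ : V →ₗ[K] K) (v : V) (P : K[X]) :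
    aeval seqShift P (fun m => φ ((f ^ m) v)) = fun m => φ ((f ^ m) (aeval f P v)) := by
  ext m
  simp [aeval_seqShift_apply, aeval_eq_sum_range (p := P) f, pow_add, Module.End.mul_apply]

lemma aeval_seqShift_charpoly_orbit [Module.Free K V] [Module.Finite K V] (f : Module.End K V)
    (φ : V →ₗ[K] K) (v : V) : aeval seqShift f.charpoly (fun m => φ ((f ^ m) v)) = 0 := by
  ext m
  simp [aeval_seqShift_orbit, LinearMap.aeval_self_charpoly]

end Orbit

section Asymptotics

variable {u : ℕ → ℝ} {r : ℝ}

lemma tendsto_shift_div_of_tendsto_ratio (hu : ∀ m, u m ≠ 0)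
    (h : Tendsto (fun m => u (m + 1) / u m) atTop (𝓝 r)) (i : ℕ) :
    Tendsto (fun m => u (m + i) / u m) atTop (𝓝 (r ^ i)) := by
  induction i with
  | zero => simp [div_self (hu _)]
  | succ i ih =>
    have hstep := (h.comp (tendsto_add_atTop_nat i)).mul ih
    rw [← pow_succ'] at hstep
    refine hstep.congr fun m => ?_
    simp only [Function.comp_apply, ← add_assoc]
    exact div_mul_div_cancel₀ (hu (m + i))

lemma eval_eq_zero_of_tendsto_ratio (hu : ∀ m, u m ≠ 0)
    (h : Tendsto (fun m => u (m + 1) / u m) atTop (𝓝 r)) {P : ℝ[X]}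
    (hP : ∀ᶠ m in atTop, aeval seqShift P u m = 0) : P.eval r = 0 := by
  have hlim : Tendsto (fun m => aeval seqShift P u m / u m) atTop (𝓝 (P.eval r)) := by
    simp only [aeval_seqShift_apply, sum_div, mul_div_assoc, eval_eq_sum_range]
    exact tendsto_finsetSum _ fun i _ =>
      (tendsto_shift_div_of_tendsto_ratio hu h i).const_mul _
  refine tendsto_nhds_unique hlim (tendsto_const_nhds.congr' ?_)
  filter_upwards [hP] with m hm
  rw [hm, zero_div]

lemma tendsto_aeval_seqShift_div_pow (hr : r ≠ 0)
    (h : Tendsto (fun m => u m / r ^ m) atTop (𝓝 0)) (P : ℝ[X]) :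
    Tendsto (fun m => aeval seqShift P u m / r ^ m) atTop (𝓝 0) := by
  have hshift (i : ℕ) : Tendsto (fun m => u (m + i) / r ^ m) atTop (𝓝 0) := by
    have := (h.comp (tendsto_add_atTop_nat i)).const_mul (r ^ i)
    rw [mul_zero] at this
    refine this.congr fun m => ?_
    simp only [Function.comp_apply, pow_add]
    field_simp
  simp only [aeval_seqShift_apply, sum_div, mul_div_assoc]
  simpa using tendsto_finsetSum _ fun i _ => (hshift i).const_mul (P.coeff i)

lemma eventually_eq_zero_of_eventually_succ_eq_mul (hr : r ≠ 0)
    (hs : ∀ᶠ m in atTop, u (m + 1) = r * u m)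
    (h : Tendsto (fun m => u m / r ^ m) atTop (𝓝 0)) :
    ∀ᶠ m in atTop, u m = 0 := by
  obtain ⟨N, hN⟩ := eventually_atTop.mp hs
  have hconst : ∀ m ≥ N, u m / r ^ m = u N / r ^ N := by
    intro m hm
    induction m, hm using Nat.le_induction with
    | base => rfl
    | succ m hm ih => rw [← ih, hN m hm, pow_succ]; field_simp
  have hN0 : u N / r ^ N = 0 := tendsto_nhds_unique
    (tendsto_const_nhds.congr' (eventually_atTop.mpr ⟨N, fun m hm => (hconst m hm).symm⟩)) h
  filter_upwards [eventually_ge_atTop N] with m hm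
  simpa [hN0, hr] using hconst m hm

theorem not_eventually_aeval_seqShift_eq_zero (hr : r ≠ 0) (hu : ∀ m, u m ≠ 0)
    (hratio : Tendsto (fun m => u (m + 1) / u m) atTop (𝓝 r))
    (hsmall : Tendsto (fun m => u m / r ^ m) atTop (𝓝 0)) {P : ℝ[X]} (hP : P ≠ 0) :
    ¬ ∀ᶠ m in atTop, aeval seqShift P u m = 0 := by
  induction hn : P.natDegree using Nat.strong_induction_on generalizing P with
  | _ n ih =>
  intro hPu
  have hroot : P.IsRoot r := eval_eq_zero_of_tendsto_ratio hu hratio hPu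
  set Q := P /ₘ (X - C r)
  have hfactor : (X - C r) * Q = P := mul_divByMonic_eq_iff_isRoot.mpr hroot
  have hQ : Q ≠ 0 := by rintro hQ; rw [hQ, mul_zero] at hfactor; exact hP hfactor.symm
  have hdeg : Q.natDegree < n := by
    rw [← hn, ← hfactor, natDegree_mul (X_sub_C_ne_zero r) hQ, natDegree_X_sub_C]; omega
  refine ih _ hdeg hQ rfl (eventually_eq_zero_of_eventually_succ_eq_mul hr ?_
    (tendsto_aeval_seqShift_div_pow hr hsmall Q))
  filter_upwards [hPu] with m hm
  rw [← hfactor, map_mul, Module.End.mul_apply, map_sub, aeval_X, aeval_C] at hm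
  simp only [LinearMap.sub_apply, Module.algebraMap_end_apply, Pi.sub_apply, Pi.smul_apply,
    smul_eq_mul, seqShift_apply] at hm
  linear_combination hm

end Asymptotics

namespace Nat

lemma cast_succ_mul_centralBinom_succ (m : ℕ) :
    ((m : ℝ) + 1) * centralBinom (m + 1) = 2 * (2 * m + 1) * centralBinom m := by
  exact_mod_cast succ_mul_centralBinom_succ m

lemma tendsto_centralBinom_succ_div :
    Tendsto (fun m => (centralBinom (m + 1) : ℝ) / centralBinom m) atTop (𝓝 4) := by
  have hratio (m : ℕ) :
      (centralBinom (m + 1) : ℝ) / centralBinom m = 4 - 2 * (1 / (m + 1)) := by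
    have := (centralBinom_pos m).ne'
    field_simp
    linear_combination cast_succ_mul_centralBinom_succ m
  simp only [hratio]
  simpa using (tendsto_one_div_add_atTop_nhds_zero_nat.const_mul 2).const_sub (4 : ℝ)

lemma centralBinom_div_four_pow_sq_le (m : ℕ) :
    ((centralBinom m : ℝ) / 4 ^ m) ^ 2 ≤ 1 / (2 * m + 1) := by
  induction m with
  | zero => simp
  | succ m ih =>
    have hrec : (centralBinom (m + 1) : ℝ) / 4 ^ (m + 1) =
        (centralBinom m : ℝ) / 4 ^ m * ((2 * m + 1) / (2 * m + 2)) := by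
      rw [pow_succ]
      field_simp
      linear_combination 2 * cast_succ_mul_centralBinom_succ m
    rw [hrec, mul_pow]
    calc _ ≤ 1 / (2 * (m : ℝ) + 1) * ((2 * m + 1) / (2 * m + 2)) ^ 2 := by gcongr
      _ ≤ 1 / (2 * (m + 1 : ℕ) + 1) := by
        push_cast
        field_simp
        nlinarith

lemma tendsto_centralBinom_div_four_pow :
    Tendsto (fun m => (centralBinom m : ℝ) / 4 ^ m) atTop (𝓝 0) := by
  have hbound : Tendsto (fun m : ℕ => 1 / (2 * (m : ℝ) + 1)) atTop (𝓝 0) := by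
    refine tendsto_const_nhds.div_atTop (tendsto_atTop_add_const_right _ _ ?_)
    exact tendsto_natCast_atTop_atTop.const_mul_atTop two_pos
  have hsqrt := hbound.sqrt
  rw [Real.sqrt_zero] at hsqrt
  refine squeeze_zero (fun m => by positivity) (fun m => ?_) hsqrt
  exact Real.le_sqrt_of_sq_le (centralBinom_div_four_pow_sq_le m)

theorem not_eventually_aeval_centralBinom_eq_zero {P : ℝ[X]} (hP : P ≠ 0) :
    ¬ ∀ᶠ m in atTop, aeval seqShift P (fun m => (centralBinom m : ℝ)) m = 0 :=
  not_eventually_aeval_seqShift_eq_zero four_ne_zero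
    (fun m => cast_ne_zero.mpr (centralBinom_ne_zero m)) tendsto_centralBinom_succ_div
    tendsto_centralBinom_div_four_pow hP

end Nat

lemma List.count_ofFn {α : Type*} [DecidableEq α] {n : ℕ} (v : Fin n → α) (a : α) :
    (List.ofFn v).count a = #{i | v i = a} := by
  rw [← Multiset.coe_count, ← Fin.univ_val_map, Multiset.count_map, card_def, filter_val]
  simp only [eq_comm]

lemma List.count_zero_add_count_one (w : List (Fin 2)) : w.count 0 + w.count 1 = w.length := by
  induction w with
  | nil => rfl
  | cons a w ih => fin_cases a <;> simp <;> omega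

lemma ncard_setOf_and_length_eq {α : Type*} (P : List α → Prop) (n : ℕ) :
    {w | P w ∧ w.length = n}.ncard = Nat.card {v : Fin n → α // P (List.ofFn v)} := by
  have himage : {w | P w ∧ w.length = n} = List.ofFn '' {v : Fin n → α | P (List.ofFn v)} := by
    ext w
    constructor
    · rintro ⟨hP, rfl⟩
      exact ⟨w.get, by simpa [List.ofFn_get] using hP, List.ofFn_get w⟩
    · rintro ⟨v, hv, rfl⟩
      exact ⟨hv, List.length_ofFn⟩
  rw [himage, Set.ncard_image_of_injective _ List.ofFn_injective, ← Nat.card_coe_set_eq]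
  rfl

lemma natCard_fin_two_tuples_count_one_eq_choose (n k : ℕ) :
    Nat.card {v : Fin n → Fin 2 // #{i | v i = 1} = k} = n.choose k := by
  let e : (Fin n → Fin 2) ≃ Finset (Fin n) :=
    { toFun v := {i | v i = 1}
      invFun s i := if i ∈ s then 1 else 0
      left_inv v := by
        ext i
        have : ∀ x : Fin 2, x ≠ 1 → x = 0 := by decide
        by_cases h : v i = 1 <;> simp [h, this]
      right_inv s := by ext; simp }
  calc Nat.card {v : Fin n → Fin 2 // #{i | v i = 1} = k}
      = Nat.card {s : Finset (Fin n) // #s = k} := Nat.card_congr (e.subtypeEquiv fun _ => Iff.rfl)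
    _ = n.choose k := by
      rw [Nat.card_eq_fintype_card, Fintype.card_finset_len, Fintype.card_fin]

lemma ncard_balanced_two_mul (m : ℕ) :
    {w : List (Fin 2) | w.count 0 = w.count 1 ∧ w.length = 2 * m}.ncard = (2 * m).choose m := by
  have hbalanced : {w : List (Fin 2) | w.count 0 = w.count 1 ∧ w.length = 2 * m} =
      {w | w.count 1 = m ∧ w.length = 2 * m} := by
    ext w
    have := w.count_zero_add_count_one
    simp only [Set.mem_ofPred_eq]
    omega
  simp only [hbalanced, ncard_setOf_and_length_eq, List.count_ofFn,
    natCard_fin_two_tuples_count_one_eq_choose]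

lemma ncard_balanced_two_mul_add_one (m : ℕ) :
    {w : List (Fin 2) | w.count 0 = w.count 1 ∧ w.length = 2 * m + 1}.ncard = 0 := by
  convert Set.ncard_empty (List (Fin 2))
  ext w
  have := w.count_zero_add_count_one
  simp only [Set.mem_ofPred_eq, Set.mem_empty_iff_false, iff_false]
  omega

namespace DFA

variable {α σ : Type*} (M : DFA α σ)

noncomputable def acceptCount (n : ℕ) (s : σ) : ℝ :=
  Nat.card {v : Fin n → α // M.evalFrom s (List.ofFn v) ∈ M.accept}

noncomputable def transfer [Fintype α] : Module.End ℝ (σ → ℝ) :=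
  ∑ a, LinearMap.funLeft ℝ ℝ (M.step · a)

lemma acceptCount_succ [Fintype α] (n : ℕ) :
    M.acceptCount (n + 1) = M.transfer (M.acceptCount n) := by
  ext s
  let e := (Fin.consEquiv fun _ : Fin (n + 1) => α).symm.subtypeEquiv
    (p := fun v => M.evalFrom s (List.ofFn v) ∈ M.accept)
    (q := fun p => M.evalFrom (M.step s p.1) (List.ofFn p.2) ∈ M.accept) fun v => by
      rw [List.ofFn_succ, evalFrom_cons]; rfl
  simp only [acceptCount, transfer, LinearMap.sum_apply, Finset.sum_apply, LinearMap.funLeft_apply]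
  rw [Nat.card_congr (e.trans (Equiv.subtypeProdEquivSigmaSubtype fun a (w : Fin n → α) =>
    M.evalFrom (M.step s a) (List.ofFn w) ∈ M.accept)), Nat.card_sigma]
  push_cast
  rfl

lemma acceptCount_eq_pow_apply [Fintype α] (n : ℕ) :
    M.acceptCount n = (M.transfer ^ n) (M.acceptCount 0) := by
  induction n with
  | zero => rfl
  | succ n ih => rw [acceptCount_succ, ih, pow_succ', Module.End.mul_apply]

lemma ncard_accepts_length_eq (n : ℕ) :
    ({w ∈ M.accepts | w.length = n}.ncard : ℝ) = M.acceptCount n M.start := by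
  rw [ncard_setOf_and_length_eq]
  rfl

lemma aeval_charpoly_acceptCount_two_mul [Fintype α] [Fintype σ] :
    aeval seqShift (M.transfer ^ 2).charpoly (fun m => M.acceptCount (2 * m) M.start) = 0 := by
  convert aeval_seqShift_charpoly_orbit (M.transfer ^ 2) (LinearMap.proj M.start)
    (M.acceptCount 0) using 3 with m
  rw [← pow_mul, ← acceptCount_eq_pow_apply]
  rfl

end DFA

/-- the language L₂ = { w ∈ {a,b}* | |w|_a = |w|_b } (over Fin 2, a = 0,
b = 1) is not counting regular: its counting function f satisfies f(2m) = C(2m,m) and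
f(2m+1) = 0, and f is not eventually equal to the counting function of any regular
language (over any finite alphabet). -/
theorem stmt11 :
    let f : ℕ → ℕ := fun m =>
      Set.ncard {w : List (Fin 2) | w.count 0 = w.count 1 ∧ w.length = m}
    (∀ m : ℕ, f (2 * m) = Nat.choose (2 * m) m) ∧
    (∀ m : ℕ, f (2 * m + 1) = 0) ∧
    (∀ (α σ : Type) (_ : Fintype α) (_ : Fintype σ) (M : DFA α σ),
      ¬ ∃ N : ℕ, ∀ n ≥ N,
        f n = Set.ncard {w ∈ (M.accepts : Set (List α)) | w.length = n}) := by
  intro f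
  refine ⟨ncard_balanced_two_mul, ncard_balanced_two_mul_add_one, ?_⟩
  rintro α σ _ _ M ⟨N, hN⟩
  have hagree : (fun m => (m.centralBinom : ℝ)) =ᶠ[atTop]
      fun m => M.acceptCount (2 * m) M.start := by
    filter_upwards [eventually_ge_atTop N] with m hm
    rw [← M.ncard_accepts_length_eq, ← hN (2 * m) (by omega),
      Nat.centralBinom_eq_two_mul_choose, ← ncard_balanced_two_mul]
  apply Nat.not_eventually_aeval_centralBinom_eq_zero (M.transfer ^ 2).charpoly_monic.ne_zero
  filter_upwards [aeval_seqShift_eventuallyEq _ hagree] with m hm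
  rw [hm, M.aeval_charpoly_acceptCount_two_mul, Pi.zero_apply]
end

section
/- The language S = { aⁿ b v₁ aⁿ v₂ | n ≥ 1, v₁,v₂ ∈ {a,b}* } equals R = { aⁿ b (a^{m_1}b)⋯(a^{m_k}b) aⁿ v | n ≥ 1, k ≥ 0, each m_i < n, v ∈ {a,b}* }. -/
/-!
Only `S ⊆ R` needs an argument: every word `u aⁿ v` with `n ≥ 1` factors as
`(a^{m₁}b)⋯(a^{m_k}b) aⁿ v'` with all `mᵢ < n`. This goes by induction on `u`, prepending one
letter at a time: a `b` opens a new empty block, an `a` lengthens the first block, and once that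
block would reach `n` letters `a` it becomes the new factor `aⁿ`.
-/

namespace BlockFactorization

/-- The word `(a^{m₁}b)⋯(a^{m_k}b)` for `ms = [m₁, …, m_k]`, with `a = 0` and `b = 1`. -/
def blockWord (ms : List ℕ) : List (Fin 2) :=
  ms.flatMap fun m => List.replicate m 0 ++ [1]

@[simp]
lemma blockWord_nil : blockWord [] = [] := rfl

@[simp]
lemma blockWord_cons (m : ℕ) (ms : List ℕ) :
    blockWord (m :: ms) = List.replicate m 0 ++ 1 :: blockWord ms := by
  simp [blockWord]

variable {n : ℕ}

lemma exists_cons_eq_blockWord_append_replicate (hn : 1 ≤ n) (x : Fin 2) {ms : List ℕ}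
    (hms : ∀ m ∈ ms, m < n) (v : List (Fin 2)) :
    ∃ ms' : List ℕ, (∀ m ∈ ms', m < n) ∧ ∃ v' : List (Fin 2),
      x :: (blockWord ms ++ List.replicate n 0 ++ v) =
        blockWord ms' ++ List.replicate n 0 ++ v' := by
  obtain rfl | rfl : x = 0 ∨ x = 1 := by fin_cases x <;> simp
  · rcases ms with _ | ⟨m, rest⟩
    · refine ⟨[], by simp, 0 :: v, ?_⟩
      rw [blockWord_nil, List.nil_append, ← List.cons_append, ← List.replicate_succ,
        List.replicate_succ', List.append_assoc, List.singleton_append]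
    · have hm : m < n := hms m List.mem_cons_self
      rcases (Nat.succ_le_of_lt hm).lt_or_eq with hlt | heq
      · refine ⟨(m + 1) :: rest, ?_, v, by simp [List.replicate_succ]⟩
        exact List.forall_mem_cons.2 ⟨hlt, (List.forall_mem_cons.1 hms).2⟩
      · refine ⟨[], by simp, 1 :: (blockWord rest ++ List.replicate n 0 ++ v), ?_⟩
        simp [← heq, List.replicate_succ]
  · refine ⟨0 :: ms, ?_, v, by simp⟩
    exact List.forall_mem_cons.2 ⟨hn, hms⟩

lemma exists_append_replicate_eq_blockWord_append_replicate (hn : 1 ≤ n)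
    (u v : List (Fin 2)) :
    ∃ ms : List ℕ, (∀ m ∈ ms, m < n) ∧ ∃ v' : List (Fin 2),
      u ++ List.replicate n 0 ++ v = blockWord ms ++ List.replicate n 0 ++ v' := by
  induction u with
  | nil => exact ⟨[], by simp, v, by simp⟩
  | cons x u ih =>
    obtain ⟨ms, hms, v', hv'⟩ := ih
    rw [List.cons_append, List.cons_append, hv']
    exact exists_cons_eq_blockWord_append_replicate hn x hms v'

end BlockFactorization

open BlockFactorization in
/-- over the alphabet Fin 2 (a = 0, b = 1),
S = { aⁿ b v₁ aⁿ v₂ | n ≥ 1, v₁,v₂ ∈ {a,b}* } equals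
R = { aⁿ b (a^{m₁}b)⋯(a^{m_k}b) aⁿ v | n ≥ 1, k ≥ 0, each mᵢ < n, v ∈ {a,b}* }. -/
theorem stmt13 :
    {w : List (Fin 2) | ∃ n : ℕ, 1 ≤ n ∧ ∃ v₁ v₂ : List (Fin 2),
        w = List.replicate n 0 ++ [1] ++ v₁ ++ List.replicate n 0 ++ v₂} =
    {w : List (Fin 2) | ∃ n : ℕ, 1 ≤ n ∧ ∃ ms : List ℕ, (∀ m ∈ ms, m < n) ∧
        ∃ v : List (Fin 2),
        w = List.replicate n 0 ++ [1] ++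
            (ms.flatMap fun m => List.replicate m 0 ++ [1]) ++
            List.replicate n 0 ++ v} := by
  ext w
  constructor
  · rintro ⟨n, hn, v₁, v₂, rfl⟩
    obtain ⟨ms, hms, v, hv⟩ := exists_append_replicate_eq_blockWord_append_replicate hn v₁ v₂
    refine ⟨n, hn, ms, hms, v, ?_⟩
    simp only [List.append_assoc] at hv ⊢
    rw [hv, blockWord]
  · rintro ⟨n, hn, ms, hms, v, rfl⟩
    exact ⟨n, hn, _, v, rfl⟩
end
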